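/- arXiv:2504.19796 — 4 statements merged into one kernel-verified Lean document; each statement's English description precedes it below -/
import Mathlib

section
/- QP solution, CBF-active region (Lemma 2, case Ω_{cbf,2}^{c̄lf}): If F_λ ≤ 0 and F_V·‖b₁‖² < F_λ·⟨b₂, b₁⟩, then b₁ ≠ 0 and the unique global minimizer of the QP is u* = −(F_λ/‖b₁‖²)·b₁ together with δ* = 0. -/
/-
With the CBF constraint active and `δ = 0`, the point `u* = (-Fλ / ‖b₁‖²) • b₁` is the projection
of `0` onto the half-space `⟪b₁, u⟫ ≥ -Fλ`, and the hypothesis on `F_V` says exactly that the CLF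
constraint holds there. Every `u` in the half-space satisfies `⟪u*, u - u*⟫ ≥ 0`, hence
`‖u*‖² + ‖u - u*‖² ≤ ‖u‖²`; with `p δ² ≥ 0` the objective grows quadratically away from `(u*, 0)`
on the feasible set, which gives both optimality and uniqueness.
-/

open RealInnerProductSpace

/-- Feasible set of the QP: the CBF constraint `Fλ + ⟨b₁,u⟩ ≥ 0` and the
CLF constraint `F_V + ⟨b₂,u⟩ ≤ δ`. -/
def QPFeasible {m : ℕ} (Fl FV : ℝ) (b₁ b₂ : EuclideanSpace ℝ (Fin m))
    (z : EuclideanSpace ℝ (Fin m) × ℝ) : Prop :=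
  0 ≤ Fl + ⟪b₁, z.1⟫ ∧ FV + ⟪b₂, z.1⟫ ≤ z.2

/-- Objective of the QP: `‖u‖² + p δ²`. -/
noncomputable def QPObj {m : ℕ} (p : ℝ) (z : EuclideanSpace ℝ (Fin m) × ℝ) : ℝ :=
  ‖z.1‖ ^ 2 + p * z.2 ^ 2

/-- `z` is the unique global minimizer of the QP. -/
def QPUniqueMin {m : ℕ} (p Fl FV : ℝ) (b₁ b₂ : EuclideanSpace ℝ (Fin m))
    (z : EuclideanSpace ℝ (Fin m) × ℝ) : Prop :=
  (QPFeasible Fl FV b₁ b₂ z ∧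
      ∀ w, QPFeasible Fl FV b₁ b₂ w → QPObj p z ≤ QPObj p w) ∧
    ∀ w, (QPFeasible Fl FV b₁ b₂ w ∧
      ∀ v, QPFeasible Fl FV b₁ b₂ v → QPObj p w ≤ QPObj p v) → w = z

section HalfSpace

variable {E : Type*} [NormedAddCommGroup E] [InnerProductSpace ℝ E]

theorem norm_sq_add_norm_sub_sq_le_of_inner_nonneg {u v : E} (h : 0 ≤ ⟪v, u - v⟫) :
    ‖v‖ ^ 2 + ‖u - v‖ ^ 2 ≤ ‖u‖ ^ 2 := by
  have := norm_add_sq_real v (u - v)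
  rw [add_sub_cancel] at this
  linarith

theorem inner_div_norm_sq_smul_self {a : E} (ha : a ≠ 0) (r : ℝ) :
    ⟪a, (r / ‖a‖ ^ 2) • a⟫ = r := by
  have : ‖a‖ ^ 2 ≠ 0 := by positivity
  rw [real_inner_smul_right, real_inner_self_eq_norm_sq, div_mul_cancel₀ _ this]

theorem norm_sq_add_norm_sub_sq_le_of_le_inner {a u : E} (ha : a ≠ 0) {r : ℝ} (hr : 0 ≤ r)
    (hu : r ≤ ⟪a, u⟫) :
    ‖(r / ‖a‖ ^ 2) • a‖ ^ 2 + ‖u - (r / ‖a‖ ^ 2) • a‖ ^ 2 ≤ ‖u‖ ^ 2 := by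
  apply norm_sq_add_norm_sub_sq_le_of_inner_nonneg
  rw [inner_sub_right, real_inner_smul_left, real_inner_smul_left,
    inner_div_norm_sq_smul_self ha, ← mul_sub]
  exact mul_nonneg (by positivity) (sub_nonneg.mpr hu)

end HalfSpace

theorem qpUniqueMin_of_quadratic_growth {m : ℕ} {p Fl FV : ℝ} (hp : 0 < p)
    {b₁ b₂ : EuclideanSpace ℝ (Fin m)} {z : EuclideanSpace ℝ (Fin m) × ℝ}
    (hz : QPFeasible Fl FV b₁ b₂ z)
    (hgrowth : ∀ w, QPFeasible Fl FV b₁ b₂ w →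
      QPObj p z + (‖w.1 - z.1‖ ^ 2 + p * (w.2 - z.2) ^ 2) ≤ QPObj p w) :
    QPUniqueMin p Fl FV b₁ b₂ z := by
  have hgap_nonneg (w : EuclideanSpace ℝ (Fin m) × ℝ) :
      0 ≤ ‖w.1 - z.1‖ ^ 2 + p * (w.2 - z.2) ^ 2 := by positivity
  refine ⟨⟨hz, fun w hw => by linarith [hgrowth w hw, hgap_nonneg w]⟩, ?_⟩
  rintro w ⟨hw, hmin⟩
  have hgap : ‖w.1 - z.1‖ ^ 2 + p * (w.2 - z.2) ^ 2 = 0 := by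
    linarith [hgrowth w hw, hmin z hz, hgap_nonneg w]
  rw [add_eq_zero_iff_of_nonneg (by positivity) (by positivity), pow_eq_zero_iff two_ne_zero,
    norm_eq_zero, sub_eq_zero, mul_eq_zero, pow_eq_zero_iff two_ne_zero, sub_eq_zero] at hgap
  exact Prod.ext hgap.1 (hgap.2.resolve_left hp.ne')

/-- QP solution on the CBF-active region `Ω_{cbf,2}^{c̄lf}`: if `Fλ ≤ 0` and
`F_V ‖b₁‖² < Fλ ⟨b₂,b₁⟩`, then `b₁ ≠ 0` and the unique global minimizer is
`u* = -(Fλ/‖b₁‖²) b₁`, `δ* = 0`. -/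
theorem qp_solution_cbf_active {m : ℕ} (p : ℝ) (hp : 0 < p)
    (Fl FV : ℝ) (b₁ b₂ : EuclideanSpace ℝ (Fin m))
    (hFl : Fl ≤ 0) (hlt : FV * ‖b₁‖ ^ 2 < Fl * ⟪b₂, b₁⟫) :
    b₁ ≠ 0 ∧
      QPUniqueMin p Fl FV b₁ b₂ (-(Fl / ‖b₁‖ ^ 2) • b₁, 0) := by
  have hb₁ : b₁ ≠ 0 := by
    rintro rfl
    simp at hlt
  have hnorm : 0 < ‖b₁‖ ^ 2 := by positivity
  refine ⟨hb₁, ?_⟩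
  rw [← neg_div]
  have hcbf : ⟪b₁, (-Fl / ‖b₁‖ ^ 2) • b₁⟫ = -Fl := inner_div_norm_sq_smul_self hb₁ (-Fl)
  have hclf : FV + ⟪b₂, (-Fl / ‖b₁‖ ^ 2) • b₁⟫ ≤ 0 := by
    rw [real_inner_smul_right, div_mul_eq_mul_div, ← le_sub_iff_add_le', zero_sub,
      div_le_iff₀ hnorm]
    linarith
  refine qpUniqueMin_of_quadratic_growth hp ⟨by linarith, hclf⟩ ?_
  rintro ⟨u, δ⟩ ⟨hu, -⟩
  have hproj := norm_sq_add_norm_sub_sq_le_of_le_inner (r := -Fl) hb₁ (neg_nonneg.mpr hFl)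
    (by linarith)
  simp only [QPObj]
  linarith
end

section
/- QP solution, CLF-active region (Lemma 2, cases Ω_{c̄bf}^{clf} and Ω_{cbf,1}^{clf}): If F_V ≥ 0 and either F_V·⟨b₁, b₂⟩ < F_λ·(1/p + ‖b₂‖²), or F_λ = 0 and b₁ = 0, then the unique global minimizer of the QP is u* = −(F_V/(1/p + ‖b₂‖²))·b₂ together with δ* = F_V/(1 + p·‖b₂‖²). -/
open RealInnerProductSpace

/-! Writing `z* = (u*, δ*)` and `μ = F_V / (1/p + ‖b₂‖²) ≥ 0` (the multiplier of the CLF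
constraint), the objective splits as `QPObj w = QPObj z* + QPObj (w - z*) + 2μ·(slack of the
CLF constraint at w)`. Hence `z*` beats every feasible `w` by the positive definite
`QPObj (w - z*)`, once it is feasible itself; the case hypothesis makes `z*`
satisfy the CBF constraint, while it meets the CLF constraint with equality. -/

variable {m : ℕ}

lemma qpObj_nonneg {p : ℝ} (hp : 0 ≤ p) (z : EuclideanSpace ℝ (Fin m) × ℝ) :
    0 ≤ QPObj p z := by
  unfold QPObj; positivity

lemma qpObj_pos {p : ℝ} (hp : 0 < p) {z : EuclideanSpace ℝ (Fin m) × ℝ} (hz : z ≠ 0) :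
    0 < QPObj p z := by
  unfold QPObj
  rcases eq_or_ne z.1 0 with h1 | h1
  · have h2 : z.2 ≠ 0 := fun h2 => hz (Prod.ext h1 h2)
    positivity
  · have := norm_pos_iff.mpr h1
    positivity

lemma qpUniqueMin_of_growth {p Fl FV : ℝ} (hp : 0 < p) {b₁ b₂ : EuclideanSpace ℝ (Fin m)}
    {z : EuclideanSpace ℝ (Fin m) × ℝ} (hz : QPFeasible Fl FV b₁ b₂ z)
    (hgrowth : ∀ w, QPFeasible Fl FV b₁ b₂ w → QPObj p z + QPObj p (w - z) ≤ QPObj p w) :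
    QPUniqueMin p Fl FV b₁ b₂ z := by
  refine ⟨⟨hz, fun w hw => ?_⟩, fun w ⟨hw, hwmin⟩ => ?_⟩
  · linarith [hgrowth w hw, qpObj_nonneg hp.le (w - z)]
  · by_contra hne
    have := qpObj_pos hp (sub_ne_zero.mpr hne)
    linarith [hgrowth w hw, hwmin z hz]

noncomputable def clfActivePoint (p FV : ℝ) (b : EuclideanSpace ℝ (Fin m)) :
    EuclideanSpace ℝ (Fin m) × ℝ :=
  (-(FV / (1 / p + ‖b‖ ^ 2)) • b, FV / (1 + p * ‖b‖ ^ 2))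

lemma qpObj_eq_clfActivePoint_add {p : ℝ} (hp : 0 < p) (FV : ℝ) (b : EuclideanSpace ℝ (Fin m))
    (w : EuclideanSpace ℝ (Fin m) × ℝ) :
    QPObj p w = QPObj p (clfActivePoint p FV b) + QPObj p (w - clfActivePoint p FV b)
      + 2 * (FV / (1 / p + ‖b‖ ^ 2)) * (w.2 - FV - ⟪b, w.1⟫) := by
  have hc : 0 < 1 / p + ‖b‖ ^ 2 := by positivity
  have hpc : 0 < 1 + p * ‖b‖ ^ 2 := by positivity
  simp only [QPObj, clfActivePoint, Prod.fst_sub, Prod.snd_sub, norm_sub_sq_real,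
    norm_smul, inner_smul_right, real_inner_comm b, mul_pow, Real.norm_eq_abs, sq_abs]
  field_simp
  ring

lemma clfActivePoint_growth {p FV : ℝ} (hp : 0 < p) (hFV : 0 ≤ FV)
    {b : EuclideanSpace ℝ (Fin m)} {w : EuclideanSpace ℝ (Fin m) × ℝ} (hw : FV + ⟪b, w.1⟫ ≤ w.2) :
    QPObj p (clfActivePoint p FV b) + QPObj p (w - clfActivePoint p FV b) ≤ QPObj p w := by
  have hmul : 0 ≤ FV / (1 / p + ‖b‖ ^ 2) := by positivity
  have hslack : 0 ≤ w.2 - FV - ⟪b, w.1⟫ := by linarith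
  rw [qpObj_eq_clfActivePoint_add hp FV b w]
  linarith [mul_nonneg hmul hslack]

lemma qpFeasible_clfActivePoint {p Fl FV : ℝ} (hp : 0 < p) {b₁ b₂ : EuclideanSpace ℝ (Fin m)}
    (hcbf : FV * ⟪b₁, b₂⟫ ≤ Fl * (1 / p + ‖b₂‖ ^ 2)) :
    QPFeasible Fl FV b₁ b₂ (clfActivePoint p FV b₂) := by
  have hc : 0 < 1 / p + ‖b₂‖ ^ 2 := by positivity
  have hpc : 0 < 1 + p * ‖b₂‖ ^ 2 := by positivity
  simp only [QPFeasible, clfActivePoint, inner_smul_right, real_inner_self_eq_norm_sq]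
  constructor
  · have : FV / (1 / p + ‖b₂‖ ^ 2) * ⟪b₁, b₂⟫ ≤ Fl := by
      rw [div_mul_eq_mul_div, div_le_iff₀ hc]; exact hcbf
    linarith
  · have hactive : FV + -(FV / (1 / p + ‖b₂‖ ^ 2)) * ‖b₂‖ ^ 2 = FV / (1 + p * ‖b₂‖ ^ 2) := by
      field_simp
      ring
    exact hactive.le

/-- QP solution on the CLF-active region (cases `Ω_{c̄bf}^{clf}` and
`Ω_{cbf,1}^{clf}`): if `F_V ≥ 0` and either `F_V ⟨b₁,b₂⟩ < Fλ (1/p + ‖b₂‖²)`,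
or `Fλ = 0` and `b₁ = 0`, then the unique global minimizer is
`u* = -(F_V/(1/p + ‖b₂‖²)) b₂`, `δ* = F_V/(1 + p ‖b₂‖²)`. -/
theorem qp_solution_clf_active {m : ℕ} (p : ℝ) (hp : 0 < p)
    (Fl FV : ℝ) (b₁ b₂ : EuclideanSpace ℝ (Fin m))
    (hFV : 0 ≤ FV)
    (hcase : FV * ⟪b₁, b₂⟫ < Fl * (1 / p + ‖b₂‖ ^ 2) ∨ (Fl = 0 ∧ b₁ = 0)) :
    QPUniqueMin p Fl FV b₁ b₂
      (-(FV / (1 / p + ‖b₂‖ ^ 2)) • b₂, FV / (1 + p * ‖b₂‖ ^ 2)) := by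
  have hcbf : FV * ⟪b₁, b₂⟫ ≤ Fl * (1 / p + ‖b₂‖ ^ 2) := by
    rcases hcase with hlt | ⟨rfl, rfl⟩
    · exact hlt.le
    · simp
  exact qpUniqueMin_of_growth hp (qpFeasible_clfActivePoint hp hcbf)
    fun w hw => clfActivePoint_growth hp hFV hw.2
end

section
/- Proposition 3 (robust modified CBF condition from SOS certificates): Let f be an n-vector of real polynomials in n variables, g an n×m matrix of real polynomials, h a real polynomial, λ a real polynomial, ε > 0 with λ − ε SOS, η ≥ 0, and λ₁ an m-vector of real polynomials. If the polynomial L_f h + λ·h − η + Σⱼ λ₁ⱼ·(L_g h)ⱼ is SOS, then for every x ∈ ℝⁿ there exists u ∈ ℝ^m such that L_f h(x) + Σⱼ (L_g h)ⱼ(x)·uⱼ + λ(x)·h(x) ≥ η; in particular h satisfies the modified CBF condition with robustness margin η. -/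
open MvPolynomial

/-- A real multivariate polynomial is a sum of squares (SOS). -/
def IsSOS {n : ℕ} (p : MvPolynomial (Fin n) ℝ) : Prop :=
  ∃ (k : ℕ) (q : Fin k → MvPolynomial (Fin n) ℝ), p = ∑ i, (q i) ^ 2

/-- Polynomial Lie derivative `L_f h = Σᵢ fᵢ ∂h/∂xᵢ`. -/
noncomputable def LfPoly {n : ℕ} (f : Fin n → MvPolynomial (Fin n) ℝ)
    (h : MvPolynomial (Fin n) ℝ) : MvPolynomial (Fin n) ℝ :=
  ∑ i, f i * pderiv i h

/-- Polynomial Lie derivative `(L_g h)ⱼ = Σᵢ g_{ij} ∂h/∂xᵢ`. -/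
noncomputable def LgPoly {n m : ℕ} (g : Fin n → Fin m → MvPolynomial (Fin n) ℝ)
    (h : MvPolynomial (Fin n) ℝ) (j : Fin m) : MvPolynomial (Fin n) ℝ :=
  ∑ i, g i j * pderiv i h

theorem IsSOS.eval_nonneg {n : ℕ} {p : MvPolynomial (Fin n) ℝ} (hp : IsSOS p) (x : Fin n → ℝ) :
    0 ≤ eval x p := by
  obtain ⟨k, q, rfl⟩ := hp
  simp only [map_sum, map_pow]
  exact Finset.sum_nonneg fun i _ => sq_nonneg _

theorem robust_modified_cbf_from_sos_general {n m : ℕ}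
    (f : Fin n → MvPolynomial (Fin n) ℝ)
    (g : Fin n → Fin m → MvPolynomial (Fin n) ℝ)
    (h lam : MvPolynomial (Fin n) ℝ)
    (η : ℝ)
    (lam₁ : Fin m → MvPolynomial (Fin n) ℝ)
    (hcert : IsSOS (LfPoly f h + lam * h - C η + ∑ j, lam₁ j * LgPoly g h j)) :
    ∀ x : Fin n → ℝ, ∃ u : Fin m → ℝ,
      η ≤ eval x (LfPoly f h) + (∑ j, eval x (LgPoly g h j) * u j) +
        eval x lam * eval x h := by
  intro x
  refine ⟨fun j => eval x (lam₁ j), ?_⟩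
  have hx := hcert.eval_nonneg x
  simp only [map_add, map_sub, map_mul, map_sum, eval_C] at hx
  simp only [mul_comm (eval x (LgPoly g h _))]
  linarith

/-- Proposition 3: robust modified CBF condition from SOS certificates.
The conclusion states that `h` satisfies the modified CBF condition with
robustness margin `η`. -/
theorem robust_modified_cbf_from_sos {n m : ℕ}
    (f : Fin n → MvPolynomial (Fin n) ℝ)
    (g : Fin n → Fin m → MvPolynomial (Fin n) ℝ)
    (h lam : MvPolynomial (Fin n) ℝ)
    (ε : ℝ) (hε : 0 < ε) (hlam : IsSOS (lam - C ε))
    (η : ℝ) (hη : 0 ≤ η)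
    (lam₁ : Fin m → MvPolynomial (Fin n) ℝ)
    (hcert : IsSOS (LfPoly f h + lam * h - C η + ∑ j, lam₁ j * LgPoly g h j)) :
    ∀ x : Fin n → ℝ, ∃ u : Fin m → ℝ,
      η ≤ eval x (LfPoly f h) + (∑ j, eval x (LgPoly g h j) * u j) +
        eval x lam * eval x h :=
  robust_modified_cbf_from_sos_general f g h lam η lam₁ hcert
end

section
/- Local Lipschitz continuity of the QP-based control law (Theorem 1, item 1): Let p > 0, let F_λ, F_V : ℝⁿ → ℝ and b₁, b₂ : ℝⁿ → ℝ^m be locally Lipschitz functions with F_V(x) ≤ 0 for all x, and assume that for every x ∈ ℝⁿ either b₁(x) ≠ 0 or F_λ(x) > 0. For each x let (u'(x), δ(x)) denote the unique global minimizer of the QP with data (F_λ(x), F_V(x), b₁(x), b₂(x), p). Then the map x ↦ (u'(x), δ(x)) is locally Lipschitz continuous on ℝⁿ. -/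
/-!
The QP minimizes a positive definite quadratic under two affine constraints, so its minimizer is
characterised by the KKT conditions, which here can be solved in closed form: with
`a = ‖b₁‖²`, `c = ⟪b₁, b₂⟫`, `d = ‖b₂‖²`, the optimal `δ` is
`max (a F_V - c min(F_λ, 0)) 0 / (a (1 + p d) - p c²)`, and the optimal `u` is the combination of
`b₁` and `b₂` it determines. Near a point where `F_λ > 0` the minimizer is `0`. Near a point where
`b₁ ≠ 0`, `a` stays above some `r > 0`; there both denominators `a` and `a (1 + p d) - p c² ≥ a`
are at least `r`, so the closed form is a locally Lipschitz expression in the data.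
-/

open RealInnerProductSpace

open Filter Topology Set

section LocallyLipschitz

variable {X : Type*} [PseudoEMetricSpace X]

theorem LocallyLipschitz.smul {F : Type*} [NormedAddCommGroup F] [NormedSpace ℝ F]
    {f : X → ℝ} {g : X → F} (hf : LocallyLipschitz f) (hg : LocallyLipschitz g) :
    LocallyLipschitz fun x => f x • g x :=
  (contDiff_fst.smul contDiff_snd : ContDiff ℝ 1 fun q : ℝ × F => q.1 • q.2).locallyLipschitz.comp
    (hf.prodMk hg)

theorem LocallyLipschitz.mul' {A : Type*} [NormedRing A] [NormedAlgebra ℝ A]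
    {f g : X → A} (hf : LocallyLipschitz f) (hg : LocallyLipschitz g) :
    LocallyLipschitz fun x => f x * g x :=
  (contDiff_fst.mul contDiff_snd : ContDiff ℝ 1 fun q : A × A => q.1 * q.2).locallyLipschitz.comp
    (hf.prodMk hg)

theorem LocallyLipschitz.inner {E : Type*} [NormedAddCommGroup E] [InnerProductSpace ℝ E]
    {f g : X → E} (hf : LocallyLipschitz f) (hg : LocallyLipschitz g) :
    LocallyLipschitz fun x => ⟪f x, g x⟫ :=
  (contDiff_fst.inner ℝ contDiff_snd : ContDiff ℝ 1 fun q : E × E => ⟪q.1, q.2⟫)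
    |>.locallyLipschitz.comp (hf.prodMk hg)

theorem lipschitzOnWith_inv_Ici {r : ℝ} (hr : 0 < r) :
    LipschitzOnWith (Real.toNNReal (r ^ 2)⁻¹) (fun t : ℝ => t⁻¹) (Ici r) := by
  refine LipschitzOnWith.of_dist_le' fun x hx y hy => ?_
  have hx' : r ≤ ‖x‖ := hx.trans (le_abs_self x)
  have hy' : r ≤ ‖y‖ := hy.trans (le_abs_self y)
  rw [dist_inv_inv₀ (hr.trans_le hx).ne' (hr.trans_le hy).ne', div_eq_inv_mul]
  gcongr
  nlinarith

theorem LocallyLipschitz.inv_max_const {f : X → ℝ} (hf : LocallyLipschitz f) {r : ℝ}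
    (hr : 0 < r) : LocallyLipschitz fun x => (max (f x) r)⁻¹ := by
  have h := (lipschitzOnWith_inv_Ici hr).comp (LipschitzWith.id.max_const r).lipschitzOnWith
    (fun t _ => le_max_right t r : MapsTo (fun t => max (id t) r) univ (Ici r))
  exact (lipschitzOnWith_univ.mp h).locallyLipschitz.comp hf

theorem LocallyLipschitz.exists_lipschitzOnWith_of_eventuallyEq {Y : Type*}
    [PseudoEMetricSpace Y] {f g : X → Y} {x : X} (hg : LocallyLipschitz g) (hfg : f =ᶠ[𝓝 x] g) :
    ∃ K, ∃ t ∈ 𝓝 x, LipschitzOnWith K f t := by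
  obtain ⟨K, t, ht, hK⟩ := hg x
  refine ⟨K, t ∩ {y | f y = g y}, inter_mem ht hfg, fun a ha b hb => ?_⟩
  rw [ha.2, hb.2]
  exact hK ha.1 hb.1

end LocallyLipschitz

def QPMinimizer {m : ℕ} (p Fl FV : ℝ) (b₁ b₂ : EuclideanSpace ℝ (Fin m))
    (z : EuclideanSpace ℝ (Fin m) × ℝ) : Prop :=
  QPFeasible Fl FV b₁ b₂ z ∧ ∀ w, QPFeasible Fl FV b₁ b₂ w → QPObj p z ≤ QPObj p w

section KKT

variable {m : ℕ} {p F G : ℝ} {b₁ b₂ : EuclideanSpace ℝ (Fin m)}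

theorem qpMinimizer_zero (hp : 0 ≤ p) (hF : 0 ≤ F) (hG : G ≤ 0) :
    QPMinimizer p F G b₁ b₂ 0 := by
  refine ⟨by simpa [QPFeasible] using ⟨hF, hG⟩, fun w _ => ?_⟩
  simp only [QPObj, Prod.fst_zero, Prod.snd_zero, norm_zero]
  nlinarith [sq_nonneg ‖w.1‖, sq_nonneg w.2]

/-- The KKT multipliers of the CBF and CLF constraints are `2 μ` and `2 p δ`. -/
theorem qpMinimizer_of_kkt (hp : 0 < p) {μ δ : ℝ} (hμ : 0 ≤ μ) (hδ : 0 ≤ δ)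
    {u : EuclideanSpace ℝ (Fin m)} (hu : u = μ • b₁ - (p * δ) • b₂)
    (h₁ : 0 ≤ F + ⟪b₁, u⟫) (hc₁ : μ * (F + ⟪b₁, u⟫) = 0)
    (h₂ : G + ⟪b₂, u⟫ ≤ δ) (hc₂ : δ * (δ - G - ⟪b₂, u⟫) = 0) :
    QPMinimizer p F G b₁ b₂ (u, δ) := by
  refine ⟨⟨h₁, h₂⟩, fun w ⟨hw₁, hw₂⟩ => ?_⟩
  have hgrad : ⟪u, w.1 - u⟫ + p * δ * (w.2 - δ)
      = μ * (F + ⟪b₁, w.1⟫) + p * δ * (w.2 - G - ⟪b₂, w.1⟫) := by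
    have h : ⟪u, w.1 - u⟫ = μ * ⟪b₁, w.1 - u⟫ - p * δ * ⟪b₂, w.1 - u⟫ := by
      nth_rewrite 1 [hu]
      rw [inner_sub_left, real_inner_smul_left, real_inner_smul_left]
    rw [h, inner_sub_right, inner_sub_right]
    linear_combination -hc₁ - p * hc₂
  have hsq : ‖w.1‖ ^ 2 = ‖u‖ ^ 2 + 2 * ⟪u, w.1 - u⟫ + ‖w.1 - u‖ ^ 2 := by
    rw [← norm_add_sq_real]; congr 2; abel
  have hμw : 0 ≤ μ * (F + ⟪b₁, w.1⟫) := mul_nonneg hμ hw₁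
  have hδw : 0 ≤ p * δ * (w.2 - G - ⟪b₂, w.1⟫) := mul_nonneg (by positivity) (by linarith)
  have : 0 ≤ p * (w.2 - δ) ^ 2 := by positivity
  simp only [QPObj]
  nlinarith [sq_nonneg ‖w.1 - u‖]

end KKT

/-- The optimal `δ`, in terms of `a = ‖b₁‖²`, `c = ⟪b₁, b₂⟫`, `d = ‖b₂‖²`. The denominator is
clamped at `r`: this changes nothing where `r ≤ a`, and makes the expression locally Lipschitz. -/
noncomputable def qpDelta (p r F G a c d : ℝ) : ℝ :=
  max (a * G - c * min F 0) 0 * (max (a * (1 + p * d) - p * (c * c)) r)⁻¹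

/-- Half the CBF multiplier, with the same conventions as `qpDelta`. -/
noncomputable def qpMu (p r F G a c d : ℝ) : ℝ :=
  (p * qpDelta p r F G a c d * c - min F 0) * (max a r)⁻¹

section Multipliers

variable {p r F G a c d : ℝ}

theorem qpDelta_nonneg (hr : 0 < r) : 0 ≤ qpDelta p r F G a c d := by
  unfold qpDelta
  have : 0 < max (a * (1 + p * d) - p * (c * c)) r := lt_max_of_lt_right hr
  positivity

theorem qpMu_mul (hr : 0 < r) (ha : r ≤ a) :
    qpMu p r F G a c d * a = p * qpDelta p r F G a c d * c - min F 0 := by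
  rw [qpMu, max_eq_left ha, inv_mul_cancel_right₀ (hr.trans_le ha).ne']

variable (hp : 0 ≤ p) (hr : 0 < r) (ha : r ≤ a) (hcd : c * c ≤ a * d)
include hp hr ha hcd

theorem qpDelta_mul :
    qpDelta p r F G a c d * (a * (1 + p * d) - p * (c * c)) = max (a * G - c * min F 0) 0 := by
  have hD : r ≤ a * (1 + p * d) - p * (c * c) := by nlinarith
  rw [qpDelta, max_eq_left hD, inv_mul_cancel_right₀ (hr.trans_le hD).ne']

theorem qpDelta_eq_zero (hs : a * G - c * min F 0 ≤ 0) : qpDelta p r F G a c d = 0 := by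
  have h := qpDelta_mul hp hr ha hcd (F := F) (G := G)
  rw [max_eq_right hs] at h
  exact (mul_eq_zero.mp h).resolve_right (by nlinarith)

theorem qpMu_eq_zero (hG : G ≤ 0) (hF : 0 < F) : qpMu p r F G a c d = 0 := by
  have hs : a * G - c * min F 0 ≤ 0 := by
    rw [min_eq_right hF.le]; nlinarith
  have h := qpMu_mul hr ha (p := p) (F := F) (G := G) (c := c) (d := d)
  rw [qpDelta_eq_zero hp hr ha hcd hs, min_eq_right hF.le] at h
  exact (mul_eq_zero.mp (by simpa using h)).resolve_right (hr.trans_le ha).ne'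

theorem qpMu_nonneg (hG : G ≤ 0) : 0 ≤ qpMu p r F G a c d := by
  have ha₀ : 0 < a := hr.trans_le ha
  suffices min F 0 ≤ p * qpDelta p r F G a c d * c by
    rw [qpMu]; exact mul_nonneg (by linarith) (by positivity)
  rcases le_or_gt (a * G - c * min F 0) 0 with hs | hs
  · simp [qpDelta_eq_zero hp hr ha hcd hs]
  have hF : F ≤ 0 := by
    by_contra! hF
    rw [min_eq_right hF.le] at hs
    nlinarith
  have hδ := qpDelta_mul hp hr ha hcd (F := F) (G := G)
  have hD : 0 < a * (1 + p * d) - p * (c * c) := by nlinarith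
  rw [min_eq_left hF] at hs hδ ⊢
  rw [max_eq_left hs.le] at hδ
  have key : F * (a * (1 + p * d) - p * (c * c)) ≤ p * c * (a * G - c * F) := by
    rcases le_or_gt c 0 with hc | hc
    · nlinarith [mul_nonneg (mul_nonneg hp ha₀.le) (mul_nonneg_of_nonpos_of_nonpos hc hG)]
    · nlinarith [mul_nonpos_of_nonpos_of_nonneg hF hD.le, mul_nonneg (mul_nonneg hp hc.le) hs.le]
  rw [← hδ] at key
  exact le_of_mul_le_mul_right (by linarith) hD

end Multipliers

section Solution

variable {E : Type*} [NormedAddCommGroup E] [InnerProductSpace ℝ E]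

noncomputable def qpSolution (p r F G : ℝ) (b₁ b₂ : E) : E × ℝ :=
  (qpMu p r F G (‖b₁‖ ^ 2) ⟪b₁, b₂⟫ (‖b₂‖ ^ 2) • b₁ -
      (p * qpDelta p r F G (‖b₁‖ ^ 2) ⟪b₁, b₂⟫ (‖b₂‖ ^ 2)) • b₂,
    qpDelta p r F G (‖b₁‖ ^ 2) ⟪b₁, b₂⟫ (‖b₂‖ ^ 2))

theorem qpMinimizer_qpSolution {m : ℕ} {p r F G : ℝ} {b₁ b₂ : EuclideanSpace ℝ (Fin m)}
    (hp : 0 < p) (hr : 0 < r) (ha : r ≤ ‖b₁‖ ^ 2) (hG : G ≤ 0) :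
    QPMinimizer p F G b₁ b₂ (qpSolution p r F G b₁ b₂) := by
  have hcd := real_inner_mul_inner_self_le b₁ b₂
  rw [real_inner_self_eq_norm_sq, real_inner_self_eq_norm_sq] at hcd
  set μ := qpMu p r F G (‖b₁‖ ^ 2) ⟪b₁, b₂⟫ (‖b₂‖ ^ 2)
  set δ := qpDelta p r F G (‖b₁‖ ^ 2) ⟪b₁, b₂⟫ (‖b₂‖ ^ 2)
  set s := ‖b₁‖ ^ 2 * G - ⟪b₁, b₂⟫ * min F 0
  set u := μ • b₁ - (p * δ) • b₂
  have hu₁ : ⟪b₁, u⟫ = μ * ‖b₁‖ ^ 2 - p * δ * ⟪b₁, b₂⟫ := by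
    rw [inner_sub_right, real_inner_smul_right, real_inner_smul_right, real_inner_self_eq_norm_sq]
  have hu₂ : ⟪b₂, u⟫ = μ * ⟪b₁, b₂⟫ - p * δ * ‖b₂‖ ^ 2 := by
    rw [inner_sub_right, real_inner_smul_right, real_inner_smul_right, real_inner_self_eq_norm_sq,
      real_inner_comm]
  have hslack₁ : F + ⟪b₁, u⟫ = F - min F 0 := by
    rw [hu₁, qpMu_mul hr ha]; ring
  have hslack₂ : ‖b₁‖ ^ 2 * (δ - G - ⟪b₂, u⟫) = max s 0 - s := by
    rw [hu₂, ← qpDelta_mul hp.le hr ha hcd]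
    linear_combination (-⟪b₁, b₂⟫) * qpMu_mul hr ha (p := p) (F := F) (G := G) (d := ‖b₂‖ ^ 2)
  have ha₀ : 0 < ‖b₁‖ ^ 2 := hr.trans_le ha
  refine qpMinimizer_of_kkt hp (qpMu_nonneg hp.le hr ha hcd hG) (qpDelta_nonneg hr) rfl
    ?_ ?_ ?_ ?_
  · rw [hslack₁]; linarith [min_le_left F 0]
  · rcases le_or_gt F 0 with hF | hF
    · rw [hslack₁, min_eq_left hF, sub_self, mul_zero]
    · rw [qpMu_eq_zero hp.le hr ha hcd hG hF, zero_mul]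
  · have : 0 ≤ ‖b₁‖ ^ 2 * (δ - G - ⟪b₂, u⟫) := by rw [hslack₂]; linarith [le_max_left s 0]
    linarith [nonneg_of_mul_nonneg_right this ha₀]
  · rcases le_or_gt s 0 with hs | hs
    · rw [qpDelta_eq_zero hp.le hr ha hcd hs, zero_mul]
    · rw [max_eq_left hs.le, sub_self] at hslack₂
      rw [(mul_eq_zero.mp hslack₂).resolve_left ha₀.ne', mul_zero]

theorem LocallyLipschitz.qpSolution {X : Type*} [PseudoEMetricSpace X] {p r : ℝ} (hr : 0 < r)
    {F G : X → ℝ} {b₁ b₂ : X → E} (hF : LocallyLipschitz F) (hG : LocallyLipschitz G)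
    (hb₁ : LocallyLipschitz b₁) (hb₂ : LocallyLipschitz b₂) :
    LocallyLipschitz fun x => qpSolution p r (F x) (G x) (b₁ x) (b₂ x) := by
  have ha : LocallyLipschitz fun x => ‖b₁ x‖ ^ 2 :=
    (contDiff_norm_sq ℝ (n := 1)).locallyLipschitz.comp hb₁
  have hc := hb₁.inner hb₂
  have hd : LocallyLipschitz fun x => ‖b₂ x‖ ^ 2 :=
    (contDiff_norm_sq ℝ (n := 1)).locallyLipschitz.comp hb₂
  have hFt := hF.min_const 0
  have hp := LocallyLipschitz.const (α := X) p
  have hδ : LocallyLipschitz fun x =>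
      qpDelta p r (F x) (G x) (‖b₁ x‖ ^ 2) ⟪b₁ x, b₂ x⟫ (‖b₂ x‖ ^ 2) :=
    (((ha.mul' hG).sub (hc.mul' hFt)).max_const 0).mul'
      (((ha.mul' ((LocallyLipschitz.const 1).add (hp.mul' hd))).sub
        (hp.mul' (hc.mul' hc))).inv_max_const hr)
  have hμ : LocallyLipschitz fun x =>
      qpMu p r (F x) (G x) (‖b₁ x‖ ^ 2) ⟪b₁ x, b₂ x⟫ (‖b₂ x‖ ^ 2) :=
    (((hp.mul' hδ).mul' hc).sub hFt).mul' (ha.inv_max_const hr)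
  exact ((hμ.smul hb₁).sub ((hp.mul' hδ).smul hb₂)).prodMk hδ

end Solution

theorem qp_control_locally_lipschitz_general {n m : ℕ} (p : ℝ) (hp : 0 < p)
    (Fl FV : EuclideanSpace ℝ (Fin n) → ℝ)
    (b₁ b₂ : EuclideanSpace ℝ (Fin n) → EuclideanSpace ℝ (Fin m))
    (hFl : LocallyLipschitz Fl) (hFV : LocallyLipschitz FV)
    (hb₁ : LocallyLipschitz b₁) (hb₂ : LocallyLipschitz b₂)
    (hFVnonpos : ∀ x, FV x ≤ 0)
    (hfeas : ∀ x, b₁ x ≠ 0 ∨ 0 < Fl x)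
    (z : EuclideanSpace ℝ (Fin n) → EuclideanSpace ℝ (Fin m) × ℝ)
    (hzuniq : ∀ x w,
      (QPFeasible (Fl x) (FV x) (b₁ x) (b₂ x) w ∧
        ∀ v, QPFeasible (Fl x) (FV x) (b₁ x) (b₂ x) v →
          QPObj p w ≤ QPObj p v) → w = z x) :
    LocallyLipschitz z := by
  intro x₀
  have hz : ∀ x w, QPMinimizer p (Fl x) (FV x) (b₁ x) (b₂ x) w → z x = w :=
    fun x w hw => (hzuniq x w hw).symm
  rcases hfeas x₀ with hb | hF
  · have ha₀ : 0 < ‖b₁ x₀‖ ^ 2 := pow_pos (norm_pos_iff.mpr hb) 2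
    have hnear : ∀ᶠ x in 𝓝 x₀, ‖b₁ x₀‖ ^ 2 / 2 ≤ ‖b₁ x‖ ^ 2 :=
      (hb₁.continuous.norm.pow 2).continuousAt.eventually (eventually_ge_nhds (half_lt_self ha₀))
    have hr := half_pos ha₀
    exact (LocallyLipschitz.qpSolution hr hFl hFV hb₁ hb₂).exists_lipschitzOnWith_of_eventuallyEq
      (hnear.mono fun x hx => hz x _ (qpMinimizer_qpSolution hp hr hx (hFVnonpos x)))
  · have hnear : ∀ᶠ x in 𝓝 x₀, 0 < Fl x :=
      hFl.continuous.continuousAt.eventually (eventually_gt_nhds hF)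
    exact (LocallyLipschitz.const 0).exists_lipschitzOnWith_of_eventuallyEq
      (hnear.mono fun x hx => hz x 0 (qpMinimizer_zero hp.le hx.le (hFVnonpos x)))

/-- Local Lipschitz continuity of the QP-based control law (Theorem 1, item 1):
if the data of the QP depends in a locally Lipschitz way on `x`, `F_V(x) ≤ 0`
everywhere, and at every `x` either `b₁(x) ≠ 0` or `Fλ(x) > 0`, then the map
sending `x` to the unique global minimizer of the corresponding QP is locally
Lipschitz. -/
theorem qp_control_locally_lipschitz {n m : ℕ} (p : ℝ) (hp : 0 < p)
    (Fl FV : EuclideanSpace ℝ (Fin n) → ℝ)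
    (b₁ b₂ : EuclideanSpace ℝ (Fin n) → EuclideanSpace ℝ (Fin m))
    (hFl : LocallyLipschitz Fl) (hFV : LocallyLipschitz FV)
    (hb₁ : LocallyLipschitz b₁) (hb₂ : LocallyLipschitz b₂)
    (hFVnonpos : ∀ x, FV x ≤ 0)
    (hfeas : ∀ x, b₁ x ≠ 0 ∨ 0 < Fl x)
    (z : EuclideanSpace ℝ (Fin n) → EuclideanSpace ℝ (Fin m) × ℝ)
    (hzmin : ∀ x, QPFeasible (Fl x) (FV x) (b₁ x) (b₂ x) (z x) ∧
      ∀ w, QPFeasible (Fl x) (FV x) (b₁ x) (b₂ x) w →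
        QPObj p (z x) ≤ QPObj p w)
    (hzuniq : ∀ x w,
      (QPFeasible (Fl x) (FV x) (b₁ x) (b₂ x) w ∧
        ∀ v, QPFeasible (Fl x) (FV x) (b₁ x) (b₂ x) v →
          QPObj p w ≤ QPObj p v) → w = z x) :
    LocallyLipschitz z :=
  qp_control_locally_lipschitz_general p hp Fl FV b₁ b₂ hFl hFV hb₁ hb₂ hFVnonpos hfeas z hzuniq
end
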